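/- Let F be a tree-graded geodesic metric space, s ∈ F, and C a connected component of F \ {s}. Then at least one of the following holds: (a) there exists a unique piece P of F such that for every x ∈ C and every geodesic [s,x] in C ∪ {s}, the intersection P ∩ [s,x] is a nontrivial initial subsegment of [s,x]; or (b) for any x, y ∈ C, any two geodesics [s,x] and [s,y] in C ∪ {s} have a common point distinct from s. -/

import Mathlib

/-- A map `γ` is a geodesic (unit-speed) on the interval `[a,b]`. -/
def IsGeodesicOn {F : Type*} [MetricSpace F] (γ : ℝ → F) (a b : ℝ) : Prop :=
  ∀ s ∈ Set.Icc a b, ∀ t ∈ Set.Icc a b, dist (γ s) (γ t) = |s - t|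

/-- A metric space is geodesic if every two points are joined by a geodesic. -/
def GeodesicSpace (F : Type*) [MetricSpace F] : Prop :=
  ∀ x y : F, ∃ γ : ℝ → F, γ 0 = x ∧ γ (dist x y) = y ∧ IsGeodesicOn γ 0 (dist x y)

/-- A subset is geodesic: any two of its points are joined by a geodesic inside it. -/
def GeodesicSubset {F : Type*} [MetricSpace F] (p : Set F) : Prop :=
  ∀ x ∈ p, ∀ y ∈ p, ∃ γ : ℝ → F, γ 0 = x ∧ γ (dist x y) = y ∧
    IsGeodesicOn γ 0 (dist x y) ∧ γ '' Set.Icc 0 (dist x y) ⊆ p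

/-- A nontrivial simple geodesic triangle: a simple loop `γ` on `[0,L]` composed of three
geodesics `[0,a]`, `[a,b]`, `[b,L]`. -/
structure SimpleGeodesicTriangle {F : Type*} [MetricSpace F]
    (γ : ℝ → F) (a b L : ℝ) : Prop where
  L_pos : 0 < L
  ha : 0 ≤ a
  hab : a ≤ b
  hbL : b ≤ L
  side1 : IsGeodesicOn γ 0 a
  side2 : IsGeodesicOn γ a b
  side3 : IsGeodesicOn γ b L
  closed : γ 0 = γ L
  simple : Set.InjOn γ (Set.Ico 0 L)

/-- `F` is tree-graded with respect to the collection `P` of pieces. -/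
structure IsTreeGraded {F : Type*} [MetricSpace F] (P : Set (Set F)) : Prop where
  pieces_nonempty : ∀ p ∈ P, p.Nonempty
  pieces_closed : ∀ p ∈ P, IsClosed p
  pieces_geodesic : ∀ p ∈ P, GeodesicSubset p
  T1 : ∀ p ∈ P, ∀ q ∈ P, p ≠ q → (p ∩ q).Subsingleton
  T2 : ∀ (γ : ℝ → F) (a b L : ℝ), SimpleGeodesicTriangle γ a b L →
    ∃ p ∈ P, γ '' Set.Icc 0 L ⊆ p

/-- `γ` is a geodesic from `s` to `x` lying in `C ∪ {s}`. -/
def IsGeodesicFromTo {F : Type*} [MetricSpace F] (γ : ℝ → F) (s x : F) (C : Set F) : Prop :=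
  γ 0 = s ∧ γ (dist s x) = x ∧ IsGeodesicOn γ 0 (dist s x) ∧
    γ '' Set.Icc 0 (dist s x) ⊆ C ∪ {s}

/-!
Call two geodesics issuing from `s` linked if they meet again away from `s`, or if they start
with nontrivial segments inside a common piece. Where a geodesic leaves a piece and comes back,
the gap closes a simple bigon, so pieces are geodesically convex and a piece containing an
initial segment of one geodesic contains an initial segment of every geodesic linked to it;
hence being linked is transitive. If the endpoints of two geodesics from `s` are closer than
the path through `s`, a geodesic joining them avoids `s` and, unless the two meet again, cuts
out a simple triangle; so they are linked. As `C` is connected and misses `s`, any two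
geodesics from `s` into `C` are linked. If (b) fails, two of them meet only at `s`, so they
start in a common piece, which then contains an initial segment of every geodesic from `s`
into `C`, and by convexity meets it in exactly such a segment.
-/

open Set

section

variable {α : Type*}

noncomputable def triangleLoop (g₁ g₂ g₃ : ℝ → α) (a b : ℝ) : ℝ → α := fun t =>
  if t ≤ a then g₁ t else if t ≤ a + b then g₂ (t - a) else g₃ (t - (a + b))

section triangleLoop

variable {g₁ g₂ g₃ : ℝ → α} {a b : ℝ}

lemma triangleLoop_of_le {t : ℝ} (ht : t ≤ a) : triangleLoop g₁ g₂ g₃ a b t = g₁ t :=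
  if_pos ht

lemma triangleLoop_of_mem_Icc₂ (e₁ : g₁ a = g₂ 0) {t : ℝ} (ht : t ∈ Icc a (a + b)) :
    triangleLoop g₁ g₂ g₃ a b t = g₂ (t - a) := by
  rcases ht.1.eq_or_lt with rfl | hat
  · simp [triangleLoop, e₁]
  · simp [triangleLoop, hat.not_ge, ht.2]

lemma triangleLoop_of_mem_Icc₃ (hb : 0 < b) (e₂ : g₂ b = g₃ 0) {t : ℝ} (ht : a + b ≤ t) :
    triangleLoop g₁ g₂ g₃ a b t = g₃ (t - (a + b)) := by
  have hat : ¬ t ≤ a := by linarith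
  rcases ht.eq_or_lt with rfl | hbt
  · simp [triangleLoop, hat, e₂]
  · simp [triangleLoop, hat, hbt.not_ge]

end triangleLoop

def StartsIn (p : Set α) (γ : ℝ → α) (b : ℝ) : Prop :=
  ∃ u, 0 < u ∧ u ≤ b ∧ γ '' Icc 0 u ⊆ p

lemma StartsIn.mono {p : Set α} {γ : ℝ → α} {b b' : ℝ} (h : StartsIn p γ b) (hb : b ≤ b') :
    StartsIn p γ b' :=
  let ⟨u, hu, hub, hup⟩ := h
  ⟨u, hu, hub.trans hb, hup⟩

def Linked (P : Set (Set α)) (γ₁ : ℝ → α) (b₁ : ℝ) (γ₂ : ℝ → α) (b₂ : ℝ) : Prop :=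
  (∃ r, 0 < r ∧ r ≤ b₁ ∧ r ≤ b₂ ∧ γ₁ r = γ₂ r) ∨ ∃ q ∈ P, StartsIn q γ₁ b₁ ∧ StartsIn q γ₂ b₂

lemma Linked.symm {P : Set (Set α)} {γ₁ γ₂ : ℝ → α} {b₁ b₂ : ℝ} (h : Linked P γ₁ b₁ γ₂ b₂) :
    Linked P γ₂ b₂ γ₁ b₁ :=
  h.imp (fun ⟨r, hr, hr₁, hr₂, he⟩ => ⟨r, hr, hr₂, hr₁, he.symm⟩)
    fun ⟨q, hq, h₁, h₂⟩ => ⟨q, hq, h₂, h₁⟩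

end

lemma IsClosed.exists_gap {E : Set ℝ} (hE : IsClosed E) {a b t : ℝ} (ha : a ∈ E) (hb : b ∈ E)
    (hat : a ≤ t) (htb : t ≤ b) (ht : t ∉ E) :
    ∃ m₁ m₂, m₁ ∈ E ∧ m₂ ∈ E ∧ a ≤ m₁ ∧ m₁ < t ∧ t < m₂ ∧ m₂ ≤ b ∧ ∀ r ∈ Ioo m₁ m₂, r ∉ E := by
  have hbdd₁ : BddAbove (E ∩ Icc a t) := bddAbove_Icc.mono inter_subset_right
  have hbdd₂ : BddBelow (E ∩ Icc t b) := bddBelow_Icc.mono inter_subset_right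
  have hne₁ : (E ∩ Icc a t).Nonempty := ⟨a, ha, left_mem_Icc.2 hat⟩
  have hne₂ : (E ∩ Icc t b).Nonempty := ⟨b, hb, right_mem_Icc.2 htb⟩
  obtain ⟨hm₁E, hm₁⟩ := (hE.inter isClosed_Icc).csSup_mem hne₁ hbdd₁
  obtain ⟨hm₂E, hm₂⟩ := (hE.inter isClosed_Icc).csInf_mem hne₂ hbdd₂
  refine ⟨_, _, hm₁E, hm₂E, hm₁.1, hm₁.2.lt_of_ne fun h => ht (h ▸ hm₁E),
    hm₂.1.lt_of_ne fun h => ht (h ▸ hm₂E), hm₂.2, fun r hr hrE => ?_⟩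
  rcases le_total r t with hrt | htr
  · exact hr.1.not_ge (le_csSup hbdd₁ ⟨hrE, hm₁.1.trans hr.1.le, hrt⟩)
  · exact hr.2.not_ge (csInf_le hbdd₂ ⟨hrE, htr, hr.2.le.trans hm₂.2⟩)

section

variable {X : Type*} [TopologicalSpace X] {h : ℝ → X} {a d : ℝ} {K : Set X}

lemma ContinuousOn.exists_last_mem (hh : ContinuousOn h (Icc a d)) (hK : IsClosed K)
    (had : a ≤ d) (ha : h a ∈ K) :
    ∃ t ∈ Icc a d, h t ∈ K ∧ ∀ t' ∈ Icc a d, h t' ∈ K → t' ≤ t := by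
  have hbdd : BddAbove (Icc a d ∩ h ⁻¹' K) := bddAbove_Icc.mono inter_subset_left
  obtain ⟨ht, htK⟩ := (hh.preimage_isClosed_of_isClosed isClosed_Icc hK).csSup_mem
    ⟨a, left_mem_Icc.2 had, ha⟩ hbdd
  exact ⟨_, ht, htK, fun t' ht' ht'K => le_csSup hbdd ⟨ht', ht'K⟩⟩

lemma ContinuousOn.exists_first_mem (hh : ContinuousOn h (Icc a d)) (hK : IsClosed K)
    (had : a ≤ d) (hd : h d ∈ K) :
    ∃ t ∈ Icc a d, h t ∈ K ∧ ∀ t' ∈ Icc a d, h t' ∈ K → t ≤ t' := by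
  have hbdd : BddBelow (Icc a d ∩ h ⁻¹' K) := bddBelow_Icc.mono inter_subset_left
  obtain ⟨ht, htK⟩ := (hh.preimage_isClosed_of_isClosed isClosed_Icc hK).csInf_mem
    ⟨d, right_mem_Icc.2 had, hd⟩ hbdd
  exact ⟨_, ht, htK, fun t' ht' ht'K => csInf_le hbdd ⟨ht', ht'K⟩⟩

end

section

variable {F : Type*} [MetricSpace F]

namespace IsGeodesicOn

variable {γ : ℝ → F} {a b : ℝ}

lemma mono (h : IsGeodesicOn γ a b) {a' b' : ℝ} (ha : a ≤ a') (hb : b' ≤ b) :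
    IsGeodesicOn γ a' b' := fun s hs t ht =>
  h s ⟨ha.trans hs.1, hs.2.trans hb⟩ t ⟨ha.trans ht.1, ht.2.trans hb⟩

lemma continuousOn (h : IsGeodesicOn γ a b) : ContinuousOn γ (Icc a b) :=
  (LipschitzOnWith.of_dist_le_mul (K := 1) fun s hs t ht => by
    simp [h s hs t ht, Real.dist_eq]).continuousOn

lemma injOn (h : IsGeodesicOn γ a b) : InjOn γ (Icc a b) := fun s hs t ht he => by
  have := h s hs t ht
  rw [he, dist_self, eq_comm, abs_eq_zero, sub_eq_zero] at this
  exact this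

lemma dist_left (h : IsGeodesicOn γ a b) {t : ℝ} (ht : t ∈ Icc a b) : dist (γ a) (γ t) = t - a := by
  rw [h a (left_mem_Icc.2 (ht.1.trans ht.2)) t ht, abs_sub_comm, abs_of_nonneg (sub_nonneg.2 ht.1)]

lemma shift (h : IsGeodesicOn γ a b) {c l : ℝ} (hc : a ≤ c) (hl : c + l ≤ b) :
    IsGeodesicOn (fun t => γ (c + t)) 0 l := fun s hs t ht => by
  rw [h (c + s) ⟨by linarith [hs.1], by linarith [hs.2]⟩ (c + t)
    ⟨by linarith [ht.1], by linarith [ht.2]⟩, add_sub_add_left_eq_sub]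

lemma reverse (h : IsGeodesicOn γ a b) : IsGeodesicOn (fun t => γ (b - t)) 0 (b - a) :=
  fun s hs t ht => by
    rw [h (b - s) ⟨by linarith [hs.2], by linarith [hs.1]⟩ (b - t)
      ⟨by linarith [ht.2], by linarith [ht.1]⟩, sub_sub_sub_cancel_left, abs_sub_comm]

lemma eq_of_apply_eq {δ : ℝ → F} {c : ℝ} (hγ : IsGeodesicOn γ a b) (hδ : IsGeodesicOn δ a c)
    (h₀ : γ a = δ a) {s t : ℝ} (hs : s ∈ Icc a b) (ht : t ∈ Icc a c) (he : γ s = δ t) :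
    s = t := by
  have h₁ := hγ.dist_left hs
  rw [h₀, he, hδ.dist_left ht] at h₁
  linarith

lemma of_eqOn_shift {ℓ : ℝ → F} (h : IsGeodesicOn γ 0 b)
    (hℓ : ∀ t ∈ Icc a (a + b), ℓ t = γ (t - a)) : IsGeodesicOn ℓ a (a + b) := fun s hs t ht => by
  rw [hℓ s hs, hℓ t ht, h (s - a) ⟨by linarith [hs.1], by linarith [hs.2]⟩ (t - a)
    ⟨by linarith [ht.1], by linarith [ht.2]⟩, sub_sub_sub_cancel_right]

end IsGeodesicOn

def IsGeodesicBetween (γ : ℝ → F) (s x : F) : Prop :=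
  γ 0 = s ∧ γ (dist s x) = x ∧ IsGeodesicOn γ 0 (dist s x)

lemma IsGeodesicFromTo.isGeodesicBetween {γ : ℝ → F} {s x : F} {C : Set F}
    (h : IsGeodesicFromTo γ s x C) : IsGeodesicBetween γ s x :=
  ⟨h.1, h.2.1, h.2.2.1⟩

lemma injOn_triangleLoop {g₁ g₂ g₃ : ℝ → F} {a b c : ℝ}
    (hb : 0 < b) (hc : 0 < c)
    (h₁ : IsGeodesicOn g₁ 0 a) (h₂ : IsGeodesicOn g₂ 0 b) (h₃ : IsGeodesicOn g₃ 0 c)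
    (e₁ : g₁ a = g₂ 0) (e₂ : g₂ b = g₃ 0)
    (d₁ : ∀ t ∈ Icc 0 a, ∀ t' ∈ Icc 0 b, g₁ t = g₂ t' → t = a)
    (d₂ : ∀ t ∈ Icc 0 b, ∀ t' ∈ Icc 0 c, g₂ t = g₃ t' → t = b)
    (d₃ : ∀ t ∈ Icc 0 c, ∀ t' ∈ Icc 0 a, g₃ t = g₁ t' → t = c) :
    InjOn (triangleLoop g₁ g₂ g₃ a b) (Ico 0 (a + b + c)) := by
  set ℓ := triangleLoop g₁ g₂ g₃ a b
  have hℓ₁ : ∀ t ∈ Icc 0 a, ℓ t = g₁ t := fun t ht => triangleLoop_of_le ht.2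
  have hℓ₂ : ∀ t ∈ Icc a (a + b), ℓ t = g₂ (t - a) := fun t ht => triangleLoop_of_mem_Icc₂ e₁ ht
  have hℓ₃ : ∀ t ∈ Icc (a + b) (a + b + c), ℓ t = g₃ (t - (a + b)) :=
    fun t ht => triangleLoop_of_mem_Icc₃ hb e₂ ht.1
  suffices h : ∀ t ∈ Ico 0 (a + b + c), ∀ t' ∈ Ico 0 (a + b + c), t < t' → ℓ t ≠ ℓ t' from
    fun t ht t' ht' he => by_contra fun hne => (lt_or_gt_of_ne hne).elim
      (fun hlt => h t ht t' ht' hlt he) fun hlt => h t' ht' t ht hlt he.symm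
  intro t ht t' ht' htt' he
  rcases le_or_gt t a with h1 | h1 <;> rcases le_or_gt t' (a + b) with h2' | h2'
  · rcases le_or_gt t' a with h1' | h1'
    · rw [hℓ₁ t ⟨ht.1, h1⟩, hℓ₁ t' ⟨ht'.1, h1'⟩] at he
      exact htt'.ne (h₁.injOn ⟨ht.1, h1⟩ ⟨ht'.1, h1'⟩ he)
    · rw [hℓ₁ t ⟨ht.1, h1⟩, hℓ₂ t' ⟨h1'.le, h2'⟩] at he
      have hta := d₁ t ⟨ht.1, h1⟩ (t' - a) ⟨by linarith, by linarith⟩ he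
      rw [hta, e₁] at he
      have := h₂.injOn (left_mem_Icc.2 hb.le) ⟨by linarith, by linarith⟩ he
      linarith
  · rw [hℓ₁ t ⟨ht.1, h1⟩, hℓ₃ t' ⟨h2'.le, ht'.2.le⟩] at he
    have := d₃ (t' - (a + b)) ⟨by linarith, by linarith [ht'.2]⟩ t ⟨ht.1, h1⟩ he.symm
    linarith [ht'.2]
  · rw [hℓ₂ t ⟨h1.le, htt'.le.trans h2'⟩, hℓ₂ t' ⟨by linarith, h2'⟩] at he
    have := h₂.injOn ⟨by linarith, by linarith⟩ ⟨by linarith, by linarith⟩ he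
    linarith
  · rcases le_or_gt t (a + b) with h2 | h2
    · rw [hℓ₂ t ⟨h1.le, h2⟩, hℓ₃ t' ⟨h2'.le, ht'.2.le⟩] at he
      have htb := d₂ (t - a) ⟨by linarith, by linarith⟩ (t' - (a + b))
        ⟨by linarith, by linarith [ht'.2]⟩ he
      rw [htb, e₂] at he
      have := h₃.injOn (left_mem_Icc.2 hc.le) ⟨by linarith, by linarith [ht'.2]⟩ he
      linarith
    · rw [hℓ₃ t ⟨h2.le, ht.2.le⟩, hℓ₃ t' ⟨h2'.le, ht'.2.le⟩] at he
      have := h₃.injOn ⟨by linarith, by linarith [ht.2]⟩ ⟨by linarith, by linarith [ht'.2]⟩ he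
      linarith

lemma simpleGeodesicTriangle_triangleLoop {g₁ g₂ g₃ : ℝ → F} {a b c : ℝ}
    (ha : 0 < a) (hb : 0 < b) (hc : 0 < c)
    (h₁ : IsGeodesicOn g₁ 0 a) (h₂ : IsGeodesicOn g₂ 0 b) (h₃ : IsGeodesicOn g₃ 0 c)
    (e₁ : g₁ a = g₂ 0) (e₂ : g₂ b = g₃ 0) (e₃ : g₃ c = g₁ 0)
    (d₁ : ∀ t ∈ Icc 0 a, ∀ t' ∈ Icc 0 b, g₁ t = g₂ t' → t = a)
    (d₂ : ∀ t ∈ Icc 0 b, ∀ t' ∈ Icc 0 c, g₂ t = g₃ t' → t = b)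
    (d₃ : ∀ t ∈ Icc 0 c, ∀ t' ∈ Icc 0 a, g₃ t = g₁ t' → t = c) :
    SimpleGeodesicTriangle (triangleLoop g₁ g₂ g₃ a b) a (a + b) (a + b + c) := by
  have hℓ₁ : ∀ t ∈ Icc 0 a, triangleLoop g₁ g₂ g₃ a b t = g₁ t :=
    fun t ht => triangleLoop_of_le ht.2
  refine ⟨by linarith, ha.le, by linarith, by linarith, fun s hs t ht => ?_,
    h₂.of_eqOn_shift fun t ht => triangleLoop_of_mem_Icc₂ e₁ ht,
    h₃.of_eqOn_shift fun t ht => triangleLoop_of_mem_Icc₃ hb e₂ ht.1, ?_,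
    injOn_triangleLoop hb hc h₁ h₂ h₃ e₁ e₂ d₁ d₂ d₃⟩
  · rw [hℓ₁ s hs, hℓ₁ t ht]
    exact h₁ s hs t ht
  · rw [hℓ₁ 0 (left_mem_Icc.2 ha.le), triangleLoop_of_mem_Icc₃ hb e₂ (by linarith),
      add_sub_cancel_left, e₃]

variable {P : Set (Set F)}

namespace IsTreeGraded

variable (hTG : IsTreeGraded P)
include hTG

lemma eq_of_mem_of_mem {p q : Set F} (hp : p ∈ P) (hq : q ∈ P) {x y : F}
    (hxp : x ∈ p) (hxq : x ∈ q) (hyp : y ∈ p) (hyq : y ∈ q) (hxy : x ≠ y) : p = q :=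
  by_contra fun hne => hxy (hTG.T1 p hp q hq hne ⟨hxp, hxq⟩ ⟨hyp, hyq⟩)

lemma exists_piece_of_triangle {g₁ g₂ g₃ : ℝ → F} {a b c : ℝ}
    (ha : 0 < a) (hb : 0 < b) (hc : 0 < c)
    (h₁ : IsGeodesicOn g₁ 0 a) (h₂ : IsGeodesicOn g₂ 0 b) (h₃ : IsGeodesicOn g₃ 0 c)
    (e₁ : g₁ a = g₂ 0) (e₂ : g₂ b = g₃ 0) (e₃ : g₃ c = g₁ 0)
    (d₁ : ∀ t ∈ Icc 0 a, ∀ t' ∈ Icc 0 b, g₁ t = g₂ t' → t = a)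
    (d₂ : ∀ t ∈ Icc 0 b, ∀ t' ∈ Icc 0 c, g₂ t = g₃ t' → t = b)
    (d₃ : ∀ t ∈ Icc 0 c, ∀ t' ∈ Icc 0 a, g₃ t = g₁ t' → t = c) :
    ∃ p ∈ P, g₁ '' Icc 0 a ⊆ p ∧ g₂ '' Icc 0 b ⊆ p ∧ g₃ '' Icc 0 c ⊆ p := by
  obtain ⟨p, hp, hsub⟩ := hTG.T2 _ _ _ _
    (simpleGeodesicTriangle_triangleLoop ha hb hc h₁ h₂ h₃ e₁ e₂ e₃ d₁ d₂ d₃)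
  refine ⟨p, hp, ?_, ?_, ?_⟩ <;> rintro _ ⟨t, ht, rfl⟩
  · exact hsub ⟨t, ⟨ht.1, by linarith [ht.2]⟩, triangleLoop_of_le ht.2⟩
  · refine hsub ⟨a + t, ⟨by linarith [ht.1], by linarith [ht.2]⟩, ?_⟩
    rw [triangleLoop_of_mem_Icc₂ e₁ ⟨by linarith [ht.1], by linarith [ht.2]⟩, add_sub_cancel_left]
  · refine hsub ⟨a + b + t, ⟨by linarith [ht.1], by linarith [ht.2]⟩, ?_⟩
    rw [triangleLoop_of_mem_Icc₃ hb e₂ (by linarith [ht.1]), add_sub_cancel_left]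

lemma exists_piece_of_bigon {σ τ : ℝ → F} {a b : ℝ} (hab : a < b)
    (hσ : IsGeodesicOn σ a b) (hτ : IsGeodesicOn τ a b) (ha : σ a = τ a) (hb : σ b = τ b)
    (hne : ∀ r ∈ Ioo a b, σ r ≠ τ r) :
    ∃ p ∈ P, σ '' Icc a b ⊆ p ∧ τ '' Icc a b ⊆ p := by
  obtain ⟨m, ham, hmb⟩ : ∃ m, a < m ∧ m < b := ⟨(a + b) / 2, by linarith, by linarith⟩
  have hστ : ∀ s ∈ Icc a b, ∀ t ∈ Icc a b, σ s = τ t → s = a ∨ s = b := by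
    intro s hs t ht he
    obtain rfl := hσ.eq_of_apply_eq hτ ha hs ht he
    by_contra! h
    exact hne s ⟨hs.1.lt_of_ne' h.1, hs.2.lt_of_ne h.2⟩ he
  -- split `σ` at `m`, so that the bigon becomes a triangle whose third side is `τ` reversed
  obtain ⟨p, hp, h₁, h₂, h₃⟩ := hTG.exists_piece_of_triangle (g₁ := fun t => σ (a + t))
    (g₂ := fun t => σ (m + t)) (g₃ := fun t => τ (b - t)) (a := m - a) (b := b - m) (c := b - a)
    (by linarith) (by linarith) (by linarith)
    (hσ.shift le_rfl (by linarith)) (hσ.shift ham.le (by linarith)) hτ.reverse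
    (by simp) (by simp [hb]) (by simp [ha])
    (fun t ht t' ht' he => by
      have := hσ.injOn ⟨by linarith [ht.1], by linarith [ht.2]⟩
        ⟨by linarith [ht'.1], by linarith [ht'.2]⟩ he
      linarith [ht'.1, ht.2])
    (fun t ht t' ht' he => by
      have := hστ (m + t) ⟨by linarith [ht.1], by linarith [ht.2]⟩ (b - t')
        ⟨by linarith [ht'.2], by linarith [ht'.1]⟩ he
      rcases this with h | h <;> linarith [ht.1])
    (fun t ht t' ht' he => by
      have h₁ := hσ.eq_of_apply_eq hτ ha ⟨by linarith [ht'.1], by linarith [ht'.2]⟩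
        ⟨by linarith [ht.2], by linarith [ht.1]⟩ he.symm
      have h₂ := hστ (a + t') ⟨by linarith [ht'.1], by linarith [ht'.2]⟩ (b - t)
        ⟨by linarith [ht.2], by linarith [ht.1]⟩ he.symm
      rcases h₂ with h | h <;> linarith [ht'.2])
  refine ⟨p, hp, ?_, ?_⟩ <;> rintro _ ⟨t, ht, rfl⟩
  · rcases le_total t m with htm | hmt
    · exact h₁ ⟨t - a, ⟨by linarith [ht.1], by linarith⟩, by simp⟩
    · exact h₂ ⟨t - m, ⟨by linarith, by linarith [ht.2]⟩, by simp⟩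
  · exact h₃ ⟨b - t, ⟨by linarith [ht.2], by linarith [ht.1]⟩, by simp⟩

lemma exists_piece_of_apply_ne {σ τ : ℝ → F} {a b t : ℝ}
    (hσ : IsGeodesicOn σ a b) (hτ : IsGeodesicOn τ a b) (ha : σ a = τ a) (hb : σ b = τ b)
    (ht : t ∈ Icc a b) (hne : σ t ≠ τ t) :
    ∃ q ∈ P, ∃ m₁ m₂, a ≤ m₁ ∧ m₁ < t ∧ t < m₂ ∧ m₂ ≤ b ∧
      σ '' Icc m₁ m₂ ⊆ q ∧ τ '' Icc m₁ m₂ ⊆ q := by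
  obtain ⟨m₁, m₂, hm₁, hm₂, ham₁, hm₁t, htm₂, hm₂b, hgap⟩ :=
    (isClosed_Icc.isClosed_eq hσ.continuousOn hτ.continuousOn).exists_gap
      ⟨left_mem_Icc.2 (ht.1.trans ht.2), ha⟩ ⟨right_mem_Icc.2 (ht.1.trans ht.2), hb⟩
      ht.1 ht.2 fun h => hne h.2
  obtain ⟨q, hq, hσq, hτq⟩ := hTG.exists_piece_of_bigon (hm₁t.trans htm₂)
    (hσ.mono ham₁ hm₂b) (hτ.mono ham₁ hm₂b) hm₁.2 hm₂.2
    fun r hr he => hgap r hr ⟨⟨ham₁.trans hr.1.le, hr.2.le.trans hm₂b⟩, he⟩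
  exact ⟨q, hq, m₁, m₂, ham₁, hm₁t, htm₂, hm₂b, hσq, hτq⟩

lemma image_Icc_subset_of_mem {p : Set F} (hp : p ∈ P) {γ : ℝ → F} {b : ℝ}
    (hγ : IsGeodesicOn γ 0 b) (h₀ : γ 0 ∈ p) (hb : γ b ∈ p) : γ '' Icc 0 b ⊆ p := by
  rintro _ ⟨t, ht, rfl⟩
  by_contra hγt
  obtain ⟨σ, hσ₀, hσb, hσ, hσp⟩ := hTG.pieces_geodesic p hp _ h₀ _ hb
  have hd : dist (γ 0) (γ b) = b := by
    simpa using hγ.dist_left (right_mem_Icc.2 (ht.1.trans ht.2))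
  rw [hd] at hσb hσ hσp
  obtain ⟨q, hq, m₁, m₂, hm₁, hm₁t, htm₂, hm₂b, hγq, hσq⟩ :=
    hTG.exists_piece_of_apply_ne hγ hσ hσ₀.symm hσb.symm ht
      fun he => hγt (he ▸ hσp (mem_image_of_mem σ ht))
  have hpq : p = q := hTG.eq_of_mem_of_mem hp hq
    (hσp (mem_image_of_mem σ ⟨hm₁, by linarith⟩)) (hσq (mem_image_of_mem σ ⟨le_rfl, by linarith⟩))
    (hσp (mem_image_of_mem σ ⟨by linarith, hm₂b⟩)) (hσq (mem_image_of_mem σ ⟨by linarith, le_rfl⟩))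
    fun he => by
      have := hσ.injOn ⟨hm₁, by linarith⟩ ⟨by linarith, hm₂b⟩ he
      linarith
  exact hγt (hpq ▸ hγq (mem_image_of_mem γ ⟨hm₁t.le, htm₂.le⟩))

lemma eq_of_startsIn {p q : Set F} (hp : p ∈ P) (hq : q ∈ P) {γ : ℝ → F} {b : ℝ}
    (hγ : IsGeodesicOn γ 0 b) (hpγ : StartsIn p γ b) (hqγ : StartsIn q γ b) : p = q := by
  obtain ⟨u, hu, hub, hup⟩ := hpγ
  obtain ⟨v, hv, hvb, hvq⟩ := hqγ
  have hw : 0 < min u v := lt_min hu hv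
  refine hTG.eq_of_mem_of_mem hp hq (hup ⟨0, ⟨le_rfl, hu.le⟩, rfl⟩) (hvq ⟨0, ⟨le_rfl, hv.le⟩, rfl⟩)
    (hup ⟨min u v, ⟨hw.le, min_le_left _ _⟩, rfl⟩) (hvq ⟨min u v, ⟨hw.le, min_le_right _ _⟩, rfl⟩)
    fun he => hw.ne (hγ.injOn ⟨le_rfl, hu.le.trans hub⟩ ⟨hw.le, (min_le_left _ _).trans hub⟩ he)

lemma startsIn_of_apply_eq {p : Set F} (hp : p ∈ P) {γ₁ γ₂ : ℝ → F} {b₁ b₂ r : ℝ}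
    (h₁ : IsGeodesicOn γ₁ 0 b₁) (h₂ : IsGeodesicOn γ₂ 0 b₂) (h₀ : γ₁ 0 = γ₂ 0)
    (hr : 0 < r) (hr₁ : r ≤ b₁) (hr₂ : r ≤ b₂) (he : γ₁ r = γ₂ r) (hγ₁ : StartsIn p γ₁ b₁) :
    StartsIn p γ₂ b₂ := by
  obtain ⟨u, hu, hub, hup⟩ := hγ₁
  by_cases hagree : EqOn γ₁ γ₂ (Icc 0 (min u r))
  · refine ⟨min u r, lt_min hu hr, (min_le_right _ _).trans hr₂, ?_⟩
    rw [← hagree.image_eq]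
    exact (image_mono (Icc_subset_Icc_right (min_le_left _ _))).trans hup
  obtain ⟨t, ht, hne⟩ : ∃ t ∈ Icc 0 (min u r), γ₁ t ≠ γ₂ t := by
    simpa only [EqOn, not_forall, exists_prop] using hagree
  have htu : t ≤ u := ht.2.trans (min_le_left _ _)
  obtain ⟨q, hq, m₁, m₂, hm₁, hm₁t, htm₂, hm₂r, h₁q, h₂q⟩ :=
    hTG.exists_piece_of_apply_ne (h₁.mono le_rfl hr₁) (h₂.mono le_rfl hr₂) h₀ he
      ⟨ht.1, ht.2.trans (min_le_right _ _)⟩ hne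
  have hpq : p = q := hTG.eq_of_mem_of_mem hp hq
    (hup ⟨m₁, ⟨hm₁, by linarith⟩, rfl⟩) (h₁q ⟨m₁, ⟨le_rfl, by linarith⟩, rfl⟩)
    (hup ⟨t, ⟨ht.1, htu⟩, rfl⟩) (h₁q ⟨t, ⟨hm₁t.le, htm₂.le⟩, rfl⟩)
    fun he => hm₁t.ne (h₁.injOn ⟨hm₁, by linarith⟩ ⟨ht.1, htu.trans hub⟩ he)
  subst hpq
  refine ⟨m₂, by linarith, hm₂r.trans hr₂, hTG.image_Icc_subset_of_mem hp
    (h₂.mono le_rfl (hm₂r.trans hr₂)) ?_ (h₂q ⟨m₂, ⟨by linarith, le_rfl⟩, rfl⟩)⟩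
  exact h₀ ▸ hup ⟨0, ⟨le_rfl, hu.le⟩, rfl⟩

lemma exists_inter_image_eq {p : Set F} (hp : p ∈ P) {γ : ℝ → F} {b : ℝ}
    (hγ : IsGeodesicOn γ 0 b) (hpγ : StartsIn p γ b) :
    ∃ u, 0 < u ∧ u ≤ b ∧ p ∩ γ '' Icc 0 b = γ '' Icc 0 u := by
  obtain ⟨v, hv, hvb, hvp⟩ := hpγ
  have h₀ : γ 0 ∈ p := hvp ⟨0, ⟨le_rfl, hv.le⟩, rfl⟩
  obtain ⟨u, hu, hup, hlast⟩ := hγ.continuousOn.exists_last_mem (hTG.pieces_closed p hp)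
    (hv.le.trans hvb) h₀
  refine ⟨u, hv.trans_le (hlast v ⟨hv.le, hvb⟩ (hvp ⟨v, ⟨hv.le, le_rfl⟩, rfl⟩)), hu.2,
    Subset.antisymm ?_ fun z hz => ?_⟩
  · rintro _ ⟨hzp, t, ht, rfl⟩
    exact ⟨t, ⟨ht.1, hlast t ht hzp⟩, rfl⟩
  · exact ⟨hTG.image_Icc_subset_of_mem hp (hγ.mono le_rfl hu.2) h₀ hup hz,
      image_mono (Icc_subset_Icc_right hu.2) hz⟩

lemma exists_startsIn_of_triangle {s : F} {g₁ g₂ h : ℝ → F} {b₁ b₂ d : ℝ}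
    (hb₁ : 0 < b₁) (hb₂ : 0 < b₂) (hd : 0 ≤ d)
    (hg₁ : IsGeodesicOn g₁ 0 b₁) (hg₂ : IsGeodesicOn g₂ 0 b₂) (hh : IsGeodesicOn h 0 d)
    (hs₁ : g₁ 0 = s) (hs₂ : g₂ 0 = s)
    (hmeet : ∀ t₁ ∈ Icc 0 b₁, ∀ t₂ ∈ Icc 0 b₂, g₁ t₁ = g₂ t₂ → t₁ = 0)
    (hh₀ : h 0 = g₁ b₁) (hhd : h d = g₂ b₂) (hhs : ∀ t ∈ Icc 0 d, h t ≠ s) :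
    ∃ q ∈ P, StartsIn q g₁ b₁ ∧ StartsIn q g₂ b₂ := by
  -- `h` leaves `g₁` for the last time at `h t₁ = g₁ u`, then first reaches `g₂` at `h t₂ = g₂ v`
  obtain ⟨t₁, ht₁, ⟨u, hu, hgu⟩, hlast⟩ := hh.continuousOn.exists_last_mem
    (isCompact_Icc.image_of_continuousOn hg₁.continuousOn).isClosed hd
    ⟨b₁, ⟨hb₁.le, le_rfl⟩, hh₀.symm⟩
  obtain ⟨t₂, ht₂, ⟨v, hv, hgv⟩, hfirst⟩ := (hh.mono ht₁.1 le_rfl).continuousOn.exists_first_mem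
    (isCompact_Icc.image_of_continuousOn hg₂.continuousOn).isClosed ht₁.2
    ⟨b₂, ⟨hb₂.le, le_rfl⟩, hhd.symm⟩
  have hu₀ : 0 < u := hu.1.lt_of_ne fun h₀ => hhs t₁ ht₁ (by rw [← hgu, ← h₀, hs₁])
  have hv₀ : 0 < v := hv.1.lt_of_ne fun h₀ => hhs t₂ ⟨ht₁.1.trans ht₂.1, ht₂.2⟩
    (by rw [← hgv, ← h₀, hs₂])
  have ht₁₂ : t₁ < t₂ := ht₂.1.lt_of_ne fun he =>
    hu₀.ne' (hmeet u hu v hv (by rw [hgu, hgv, he]))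
  obtain ⟨q, hq, hq₁, -, hq₃⟩ := hTG.exists_piece_of_triangle (g₁ := g₁)
    (g₂ := fun t => h (t₁ + t)) (g₃ := fun t => g₂ (v - t)) hu₀ (sub_pos.2 ht₁₂) hv₀
    (hg₁.mono le_rfl hu.2) (hh.shift ht₁.1 (by linarith [ht₂.2]))
    (by simpa using (hg₂.mono le_rfl hv.2).reverse) (by simp [hgu]) (by simp [hgv])
    (by simp [hs₁, hs₂])
    (fun t ht t' ht' he => by
      have hle : t₁ + t' ≤ t₁ := hlast _ ⟨by linarith [ht₁.1, ht'.1], by linarith [ht'.2, ht₂.2]⟩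
        ⟨t, ⟨ht.1, ht.2.trans hu.2⟩, he⟩
      obtain rfl : t' = 0 := by linarith [ht'.1]
      rw [add_zero, ← hgu] at he
      exact hg₁.injOn ⟨ht.1, ht.2.trans hu.2⟩ hu he)
    (fun t ht t' ht' he => by
      have : t₂ ≤ t₁ + t := hfirst _ ⟨by linarith [ht.1], by linarith [ht.2, ht₂.2]⟩
        ⟨v - t', ⟨by linarith [ht'.2], by linarith [ht'.1, hv.2]⟩, he.symm⟩
      linarith [ht.2])
    (fun t ht t' ht' he => by
      obtain rfl := hmeet t' ⟨ht'.1, ht'.2.trans hu.2⟩ (v - t)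
        ⟨by linarith [ht.2], by linarith [ht.1, hv.2]⟩ he.symm
      rw [hs₁, ← hs₂] at he
      have := hg₂.injOn ⟨by linarith [ht.2], by linarith [ht.1, hv.2]⟩ ⟨le_rfl, hb₂.le⟩ he
      linarith)
  refine ⟨q, hq, ⟨u, hu₀, hu.2, hq₁⟩, v, hv₀, hv.2, ?_⟩
  rintro _ ⟨t, ht, rfl⟩
  exact hq₃ ⟨v - t, ⟨by linarith [ht.2], by linarith [ht.1]⟩, by simp⟩

lemma startsIn_of_linked {p : Set F} (hp : p ∈ P) {γ₁ γ₂ : ℝ → F} {b₁ b₂ : ℝ}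
    (h₁ : IsGeodesicOn γ₁ 0 b₁) (h₂ : IsGeodesicOn γ₂ 0 b₂) (h₀ : γ₁ 0 = γ₂ 0)
    (hl : Linked P γ₁ b₁ γ₂ b₂) (hγ₁ : StartsIn p γ₁ b₁) : StartsIn p γ₂ b₂ :=
  hl.elim (fun ⟨_, hr, hr₁, hr₂, he⟩ => hTG.startsIn_of_apply_eq hp h₁ h₂ h₀ hr hr₁ hr₂ he hγ₁)
    fun ⟨_, hq, hq₁, hq₂⟩ => hTG.eq_of_startsIn hq hp h₁ hq₁ hγ₁ ▸ hq₂

lemma linked_of_dist_lt (hF : GeodesicSpace F) {s : F} {g₁ g₂ : ℝ → F} {b₁ b₂ β₁ β₂ : ℝ}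
    (hg₁ : IsGeodesicOn g₁ 0 b₁) (hg₂ : IsGeodesicOn g₂ 0 b₂) (hs₁ : g₁ 0 = s) (hs₂ : g₂ 0 = s)
    (hβ₁ : β₁ ∈ Ioc 0 b₁) (hβ₂ : β₂ ∈ Ioc 0 b₂) (hlt : dist (g₁ β₁) (g₂ β₂) < β₁ + β₂) :
    Linked P g₁ b₁ g₂ b₂ := by
  by_cases hmeet : ∃ t₁ ∈ Ioc 0 β₁, ∃ t₂ ∈ Icc 0 β₂, g₁ t₁ = g₂ t₂
  · obtain ⟨t₁, ht₁, t₂, ht₂, he⟩ := hmeet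
    obtain rfl := hg₁.eq_of_apply_eq hg₂ (hs₁.trans hs₂.symm) ⟨ht₁.1.le, ht₁.2.trans hβ₁.2⟩
      ⟨ht₂.1, ht₂.2.trans hβ₂.2⟩ he
    exact Or.inl ⟨t₁, ht₁.1, ht₁.2.trans hβ₁.2, ht₂.2.trans hβ₂.2, he⟩
  push Not at hmeet
  obtain ⟨h, hh₀, hhd, hh⟩ := hF (g₁ β₁) (g₂ β₂)
  have hd₁ : dist s (g₁ β₁) = β₁ := by simpa [hs₁] using hg₁.dist_left ⟨hβ₁.1.le, hβ₁.2⟩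
  have hd₂ : dist s (g₂ β₂) = β₂ := by simpa [hs₂] using hg₂.dist_left ⟨hβ₂.1.le, hβ₂.2⟩
  have hhs : ∀ t ∈ Icc 0 (dist (g₁ β₁) (g₂ β₂)), h t ≠ s := fun t ht he => by
    have h₁ := hh.dist_left ht
    have h₂ := hh t ht _ (right_mem_Icc.2 (ht.1.trans ht.2))
    rw [he, hh₀, dist_comm, hd₁, sub_zero] at h₁
    rw [he, hhd, hd₂, abs_sub_comm, abs_of_nonneg (sub_nonneg.2 ht.2)] at h₂
    linarith
  obtain ⟨q, hq, hq₁, hq₂⟩ := hTG.exists_startsIn_of_triangle hβ₁.1 hβ₂.1 dist_nonneg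
    (hg₁.mono le_rfl hβ₁.2) (hg₂.mono le_rfl hβ₂.2) hh hs₁ hs₂
    (fun t₁ ht₁ t₂ ht₂ he => by_contra fun h₀ => hmeet t₁ ⟨ht₁.1.lt_of_ne' h₀, ht₁.2⟩ t₂ ht₂ he)
    hh₀ hhd hhs
  exact Or.inr ⟨q, hq, hq₁.mono hβ₁.2, hq₂.mono hβ₂.2⟩

lemma linked_trans (hF : GeodesicSpace F) {s : F} {γ₁ γ₂ γ₃ : ℝ → F} {b₁ b₂ b₃ : ℝ}
    (h₁ : IsGeodesicOn γ₁ 0 b₁) (h₂ : IsGeodesicOn γ₂ 0 b₂) (h₃ : IsGeodesicOn γ₃ 0 b₃)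
    (hs₁ : γ₁ 0 = s) (hs₂ : γ₂ 0 = s) (hs₃ : γ₃ 0 = s)
    (h₁₂ : Linked P γ₁ b₁ γ₂ b₂) (h₂₃ : Linked P γ₂ b₂ γ₃ b₃) : Linked P γ₁ b₁ γ₃ b₃ := by
  rcases h₁₂ with ⟨r, hr, hr₁, hr₂, he⟩ | ⟨q, hq, hq₁, hq₂⟩
  · rcases h₂₃ with ⟨r', hr', hr'₂, hr'₃, he'⟩ | ⟨q, hq, hq₂, hq₃⟩
    · refine hTG.linked_of_dist_lt hF h₁ h₃ hs₁ hs₃ ⟨hr, hr₁⟩ ⟨hr', hr'₃⟩ ?_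
      rw [he, ← he', h₂ r ⟨hr.le, hr₂⟩ r' ⟨hr'.le, hr'₂⟩, abs_sub_lt_iff]
      constructor <;> linarith
    · exact Or.inr ⟨q, hq, hTG.startsIn_of_apply_eq hq h₂ h₁ (hs₂.trans hs₁.symm) hr hr₂ hr₁
        he.symm hq₂, hq₃⟩
  · exact Or.inr ⟨q, hq, hq₁, hTG.startsIn_of_linked hq h₂ h₃ (hs₂.trans hs₃.symm) h₂₃ hq₂⟩

lemma linked_of_isPreconnected (hF : GeodesicSpace F)
    {s : F} {C : Set F} (hC : IsPreconnected C) (hsC : s ∉ C) {x y : F} {γ δ : ℝ → F}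
    (hx : x ∈ C) (hy : y ∈ C) (hγ : IsGeodesicBetween γ s x) (hδ : IsGeodesicBetween δ s y) :
    Linked P γ (dist s x) δ (dist s y) := by
  have hpos : ∀ z ∈ C, 0 < dist s z := fun z hz => dist_pos.2 fun h => hsC (h ▸ hz)
  have hnear : ∀ {z w γ δ}, z ∈ C → w ∈ C → dist z w < dist s z → IsGeodesicBetween γ s z →
      IsGeodesicBetween δ s w → Linked P γ (dist s z) δ (dist s w) :=
    fun hz hw hzw ⟨hγ₀, hγz, hγ⟩ ⟨hδ₀, hδw, hδ⟩ =>
      hTG.linked_of_dist_lt hF hγ hδ hγ₀ hδ₀ ⟨hpos _ hz, le_rfl⟩ ⟨hpos _ hw, le_rfl⟩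
        (by rw [hγz, hδw]; linarith [hpos _ hw])
  refine hC.induction₂' (fun z w => ∀ γ δ : ℝ → F, IsGeodesicBetween γ s z →
    IsGeodesicBetween δ s w → Linked P γ (dist s z) δ (dist s w)) (fun z hz => ?_)
    (fun z w v _ hw _ hzw hwv γ δ hγ hδ => ?_) hx hy γ δ hγ hδ
  · filter_upwards [self_mem_nhdsWithin, mem_nhdsWithin_of_mem_nhds
      (Metric.ball_mem_nhds z (hpos z hz))] with w hw hzw
    exact ⟨fun γ δ hγ hδ => hnear hz hw (Metric.mem_ball'.1 hzw) hγ hδ,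
      fun γ δ hγ hδ => (hnear hz hw (Metric.mem_ball'.1 hzw) hδ hγ).symm⟩
  · obtain ⟨η, hη₀, hηw, hη⟩ := hF s w
    exact hTG.linked_trans hF hγ.2.2 hη hδ.2.2 hγ.1 hη₀ hδ.1 (hzw γ η hγ ⟨hη₀, hηw, hη⟩)
      (hwv η δ ⟨hη₀, hηw, hη⟩ hδ)

end IsTreeGraded

end

theorem stmt_12_general {F : Type*} [MetricSpace F] (hF : GeodesicSpace F)
    (P : Set (Set F)) (hTG : IsTreeGraded P) (s : F) (C : Set F)
    (hC : ∃ x₀ : F, x₀ ≠ s ∧ C = connectedComponentIn ({s}ᶜ : Set F) x₀) :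
    (∃! p : Set F, p ∈ P ∧ ∀ x ∈ C, ∀ γ : ℝ → F, IsGeodesicFromTo γ s x C →
      ∃ u : ℝ, 0 < u ∧ u ≤ dist s x ∧
        p ∩ γ '' Set.Icc 0 (dist s x) = γ '' Set.Icc 0 u) ∨
    (∀ x ∈ C, ∀ y ∈ C, ∀ γ δ : ℝ → F,
      IsGeodesicFromTo γ s x C → IsGeodesicFromTo δ s y C →
      ∃ z : F, z ≠ s ∧ z ∈ γ '' Set.Icc 0 (dist s x) ∧ z ∈ δ '' Set.Icc 0 (dist s y)) := by
  obtain ⟨x₀, -, rfl⟩ := hC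
  have hlinked : ∀ {x y γ δ}, x ∈ connectedComponentIn {s}ᶜ x₀ → y ∈ connectedComponentIn {s}ᶜ x₀ →
      IsGeodesicBetween γ s x → IsGeodesicBetween δ s y → Linked P γ (dist s x) δ (dist s y) :=
    hTG.linked_of_isPreconnected hF isPreconnected_connectedComponentIn
      fun h => connectedComponentIn_subset {s}ᶜ x₀ h rfl
  refine or_iff_not_imp_right.2 fun hb => ?_
  push Not at hb
  obtain ⟨x, hx, y, hy, γ, δ, hγ, hδ, hdisj⟩ := hb
  obtain ⟨r, hr, hrx, hry, he⟩ | ⟨p, hp, hpγ, -⟩ :=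
    hlinked hx hy hγ.isGeodesicBetween hδ.isGeodesicBetween
  · have hγr : γ r ≠ s := fun h => hr.ne (by simpa [h, hγ.1] using hγ.2.2.1.dist_left ⟨hr.le, hrx⟩)
    exact absurd ⟨r, ⟨hr.le, hry⟩, he.symm⟩ (hdisj (γ r) hγr ⟨r, ⟨hr.le, hrx⟩, rfl⟩)
  refine ⟨p, ⟨hp, fun x' hx' γ' hγ' => ?_⟩, fun q ⟨hq, hqγ⟩ => ?_⟩
  · exact hTG.exists_inter_image_eq hp hγ'.2.2.1 (hTG.startsIn_of_linked hp hγ.2.2.1 hγ'.2.2.1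
      (hγ.1.trans hγ'.1.symm) (hlinked hx hx' hγ.isGeodesicBetween hγ'.isGeodesicBetween) hpγ)
  · obtain ⟨u, hu, hux, hqu⟩ := hqγ x hx γ hγ
    exact hTG.eq_of_startsIn hq hp hγ.2.2.1 ⟨u, hu, hux, hqu ▸ inter_subset_left⟩ hpγ

/-- for a connected component `C` of `F \ {s}` in a tree-graded space,
either (a) there is a unique piece `P` meeting every geodesic from `s` into `C ∪ {s}` in a
nontrivial initial subsegment, or (b) every two geodesics from `s` into `C ∪ {s}` share a
point different from `s`. -/
theorem stmt_12 {F : Type*} [MetricSpace F] [CompleteSpace F] (hF : GeodesicSpace F)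
    (P : Set (Set F)) (hTG : IsTreeGraded P) (s : F) (C : Set F)
    (hC : ∃ x₀ : F, x₀ ≠ s ∧ C = connectedComponentIn ({s}ᶜ : Set F) x₀) :
    (∃! p : Set F, p ∈ P ∧ ∀ x ∈ C, ∀ γ : ℝ → F, IsGeodesicFromTo γ s x C →
      ∃ u : ℝ, 0 < u ∧ u ≤ dist s x ∧
        p ∩ γ '' Set.Icc 0 (dist s x) = γ '' Set.Icc 0 u) ∨
    (∀ x ∈ C, ∀ y ∈ C, ∀ γ δ : ℝ → F,
      IsGeodesicFromTo γ s x C → IsGeodesicFromTo δ s y C →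
      ∃ z : F, z ≠ s ∧ z ∈ γ '' Set.Icc 0 (dist s x) ∧ z ∈ δ '' Set.Icc 0 (dist s y)) :=
  stmt_12_general hF P hTG s C hC
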